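/- arXiv:1901.07590 — 2 statements merged into one kernel-verified Lean document; each statement's English description precedes it below -/
import Mathlib

section
/- Let m ≥ 1 be an integer. The function ψ : [0, π] → ℝ defined by ψ(α) = (−1)^r·cos(mα) − 2r for α ∈ [rπ/m, (r+1)π/m], r ∈ {0, 1, …, m−1}, is strictly decreasing on [0, π]. -/
open Real Set

lemma psi_piece_eq (m : ℕ) (hm : 1 ≤ m) (ψ : ℝ → ℝ)
    (hψ : ∀ r : ℕ, r ≤ m - 1 →
      ∀ α ∈ Icc ((r : ℝ) * π / m) (((r : ℝ) + 1) * π / m),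
        ψ α = (-1 : ℝ) ^ r * Real.cos (m * α) - 2 * r)
    (r : ℕ) (hr : r ≤ m - 1) :
    ∀ α ∈ Icc ((r : ℝ) * π / m) (((r : ℝ) + 1) * π / m),
      ψ α = Real.cos ((m : ℝ) * α - r * π) - 2 * r := by
  intro α hα
  rw [hψ r hr α hα]
  have hcr : Real.cos ((r : ℝ) * π) = (-1 : ℝ) ^ r := by
    simpa using Real.cos_nat_mul_pi_sub 0 r
  have hsr : Real.sin ((r : ℝ) * π) = 0 := Real.sin_nat_mul_pi r
  have h2 : ((-1 : ℝ)) ^ r * (-1 : ℝ) ^ r = 1 := by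
    rw [← pow_add]; exact Even.neg_one_pow ⟨r, rfl⟩
  have hcos : Real.cos ((m : ℝ) * α) = (-1 : ℝ) ^ r * Real.cos ((m : ℝ) * α - r * π) := by
    rw [show (m : ℝ) * α = ((m : ℝ) * α - r * π) + r * π by ring, Real.cos_add, hcr, hsr]
    ring
  rw [hcos]
  linear_combination Real.cos ((m : ℝ) * α - r * π) * h2

lemma psi_piece_anti (m : ℕ) (hm : 1 ≤ m) (ψ : ℝ → ℝ)
    (hψ : ∀ r : ℕ, r ≤ m - 1 →
      ∀ α ∈ Icc ((r : ℝ) * π / m) (((r : ℝ) + 1) * π / m),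
        ψ α = (-1 : ℝ) ^ r * Real.cos (m * α) - 2 * r)
    (r : ℕ) (hr : r ≤ m - 1) :
    StrictAntiOn ψ (Icc ((r : ℝ) * π / m) (((r : ℝ) + 1) * π / m)) := by
  have hm0 : (0 : ℝ) < m := by exact_mod_cast hm
  intro a ha b hb hab
  rw [psi_piece_eq m hm ψ hψ r hr a ha, psi_piece_eq m hm ψ hψ r hr b hb]
  have ha1 : (r : ℝ) * π ≤ m * a := by
    have := (div_le_iff₀ hm0).mp ha.1; linarith
  have ha2 : (m : ℝ) * a ≤ ((r : ℝ) + 1) * π := by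
    have := (le_div_iff₀ hm0).mp ha.2; linarith
  have hb1 : (r : ℝ) * π ≤ m * b := by
    have := (div_le_iff₀ hm0).mp hb.1; linarith
  have hb2 : (m : ℝ) * b ≤ ((r : ℝ) + 1) * π := by
    have := (le_div_iff₀ hm0).mp hb.2; linarith
  have hmem_a : (m : ℝ) * a - r * π ∈ Icc 0 π := ⟨by linarith, by linarith⟩
  have hmem_b : (m : ℝ) * b - r * π ∈ Icc 0 π := ⟨by linarith, by linarith⟩
  have hlt : (m : ℝ) * a - r * π < (m : ℝ) * b - r * π := by
    have : (m : ℝ) * a < m * b := by nlinarith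
    linarith
  have := Real.strictAntiOn_cos hmem_a hmem_b hlt
  linarith

/-- for an integer `m ≥ 1`, any function `ψ : ℝ → ℝ` satisfying
`ψ(α) = (−1)^r·cos(mα) − 2r` on `[rπ/m, (r+1)π/m]` for every `r ∈ {0,…,m−1}` is
strictly decreasing on `[0, π]`. -/
theorem psi_strictAntiOn (m : ℕ) (hm : 1 ≤ m) (ψ : ℝ → ℝ)
    (hψ : ∀ r : ℕ, r ≤ m - 1 →
      ∀ α ∈ Icc ((r : ℝ) * π / m) (((r : ℝ) + 1) * π / m),
        ψ α = (-1 : ℝ) ^ r * Real.cos (m * α) - 2 * r) :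
    StrictAntiOn ψ (Icc 0 π) := by
  have hπ := Real.pi_pos
  have hm0 : (0 : ℝ) < m := by exact_mod_cast hm
  intro x hx y hy hxy
  have hxπ : x < π := lt_of_lt_of_le hxy hy.2
  have hy0 : 0 < y := lt_of_le_of_lt hx.1 hxy
  set r := ⌊(m : ℝ) * x / π⌋₊ with hr_def
  set c := ⌈(m : ℝ) * y / π⌉₊ with hc_def
  have hx0' : 0 ≤ (m : ℝ) * x / π := div_nonneg (mul_nonneg hm0.le hx.1) hπ.le
  have hr_lt : r < m := by
    have h1 : (m : ℝ) * x / π < m := by rw [div_lt_iff₀ hπ]; nlinarith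
    exact_mod_cast (Nat.floor_lt hx0').mpr (by exact_mod_cast h1)
  have hr_le : r ≤ m - 1 := by omega
  have hrx : (r : ℝ) * π / m ≤ x := by
    have h1 : (r : ℝ) ≤ (m : ℝ) * x / π := Nat.floor_le hx0'
    have h2 := (le_div_iff₀ hπ).mp h1
    rw [div_le_iff₀ hm0]; linarith
  have hxr1 : x < ((r : ℝ) + 1) * π / m := by
    have h1 : (m : ℝ) * x / π < r + 1 := Nat.lt_floor_add_one _
    have h2 := (div_lt_iff₀ hπ).mp h1
    rw [lt_div_iff₀ hm0]; linarith
  have hc1 : 1 ≤ c := Nat.one_le_ceil_iff.mpr (div_pos (mul_pos hm0 hy0) hπ)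
  have hcm : c ≤ m := Nat.ceil_le.mpr (by rw [div_le_iff₀ hπ]; nlinarith [hy.2])
  set s := c - 1 with hs_def
  have hs_le : s ≤ m - 1 := by omega
  have hcs : (s : ℝ) = (c : ℝ) - 1 := by
    rw [hs_def]; push_cast [Nat.cast_sub hc1]; ring
  have hsy : (s : ℝ) * π / m < y := by
    have h1 : ((c : ℝ)) < (m : ℝ) * y / π + 1 := Nat.ceil_lt_add_one (div_pos (mul_pos hm0 hy0) hπ).le
    have h2 : (s : ℝ) < (m : ℝ) * y / π := by rw [hcs]; linarith
    have h3 := (lt_div_iff₀ hπ).mp h2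
    rw [div_lt_iff₀ hm0]; linarith
  have hys1 : y ≤ ((s : ℝ) + 1) * π / m := by
    have h1 : (m : ℝ) * y / π ≤ c := Nat.le_ceil _
    have h2 := (div_le_iff₀ hπ).mp h1
    rw [le_div_iff₀ hm0, hcs]; linarith
  have hrs : r ≤ s := by
    by_contra h
    have h1 : s + 1 ≤ r := by omega
    have h2 : ((s : ℝ) + 1) ≤ (r : ℝ) := by exact_mod_cast h1
    have h3 : ((s : ℝ) + 1) * π / m ≤ (r : ℝ) * π / m := by gcongr
    linarith
  rcases eq_or_lt_of_le hrs with heq | hlt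
  · -- same piece
    rw [← heq] at hsy hys1
    exact psi_piece_anti m hm ψ hψ r hr_le
      ⟨hrx, (hxy.trans_le hys1).le⟩ ⟨hsy.le, hys1⟩ hxy
  · -- different pieces
    have hend_r : ψ (((r : ℝ) + 1) * π / m) = -1 - 2 * r := by
      rw [psi_piece_eq m hm ψ hψ r hr_le _ ⟨by gcongr <;> linarith, le_refl _⟩]
      have : (m : ℝ) * (((r : ℝ) + 1) * π / m) - r * π = π := by
        field_simp
        ring
      rw [this, Real.cos_pi]
    have hend_s : ψ ((s : ℝ) * π / m) = 1 - 2 * s := by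
      rw [psi_piece_eq m hm ψ hψ s hs_le _ ⟨le_refl _, by gcongr <;> linarith⟩]
      have : (m : ℝ) * ((s : ℝ) * π / m) - s * π = 0 := by
        field_simp
        ring
      rw [this, Real.cos_zero]
    have h1 : ψ (((r : ℝ) + 1) * π / m) < ψ x := by
      apply psi_piece_anti m hm ψ hψ r hr_le
        ⟨hrx, le_of_lt hxr1⟩ ⟨by gcongr <;> linarith, le_refl _⟩ hxr1
    have h2 : ψ y < ψ ((s : ℝ) * π / m) := by
      apply psi_piece_anti m hm ψ hψ s hs_le
        ⟨le_refl _, by gcongr <;> linarith⟩ ⟨le_of_lt hsy, hys1⟩ hsy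
    have h3 : (r : ℝ) + 1 ≤ (s : ℝ) := by exact_mod_cast hlt
    linarith
end

section
/- Let m ≥ 1 be an integer. The function ψ : [0, π] → ℝ defined by ψ(α) = (−1)^r·cos(mα) − 2r for α ∈ [rπ/m, (r+1)π/m], r ∈ {0, 1, …, m−1}, satisfies ψ(α) ≤ cos(α) for every α ∈ [0, π]; hence the margin-enforcing loss penalizes the true class at least as much as the standard softmax loss does. -/
open Real Set

/-!
On the first piece `[0, π/m]` we have `α ≤ mα ≤ π`, so `ψ α = cos (mα) ≤ cos α` because `cos` is
decreasing on `[0, π]`. On every later piece `r ≥ 1`, so `ψ α ≤ 1 - 2r ≤ -1 ≤ cos α`.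
-/

lemma cos_mul_le_cos {k α : ℝ} (hk : 1 ≤ k) (hα : 0 ≤ α) (hkα : k * α ≤ π) :
    cos (k * α) ≤ cos α :=
  cos_le_cos_of_nonneg_of_le_pi hα hkα (le_mul_of_one_le_left hα hk)

lemma neg_one_pow_mul_sub_two_mul_le_neg_one {r : ℕ} (hr : 1 ≤ r) {c : ℝ} (hc : |c| ≤ 1) :
    (-1 : ℝ) ^ r * c - 2 * r ≤ -1 := by
  have hsign : (-1 : ℝ) ^ r * c ≤ 1 :=
    calc (-1 : ℝ) ^ r * c ≤ |(-1 : ℝ) ^ r * c| := le_abs_self _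
      _ = |c| := by rw [abs_mul, abs_neg_one_pow, one_mul]
      _ ≤ 1 := hc
  have : (1 : ℝ) ≤ r := by exact_mod_cast hr
  linarith

lemma exists_nat_mem_Icc_add_one {m : ℕ} (hm : 1 ≤ m) {x : ℝ} (hx : x ∈ Icc (0 : ℝ) m) :
    ∃ r : ℕ, r ≤ m - 1 ∧ x ∈ Icc (r : ℝ) (r + 1) := by
  rcases hx.2.lt_or_eq with hxm | rfl
  · have hfloor : ⌊x⌋₊ < m := (Nat.floor_lt hx.1).2 hxm
    exact ⟨⌊x⌋₊, by omega, Nat.floor_le hx.1, (Nat.lt_floor_add_one x).le⟩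
  · refine ⟨m - 1, le_rfl, ?_, ?_⟩ <;> push_cast [Nat.cast_sub hm] <;> linarith

lemma exists_mem_Icc_piece {m : ℕ} (hm : 1 ≤ m) {L α : ℝ} (hL : 0 < L) (hα : α ∈ Icc 0 L) :
    ∃ r : ℕ, r ≤ m - 1 ∧ α ∈ Icc ((r : ℝ) * L / m) ((r + 1) * L / m) := by
  have hm0 : (0 : ℝ) < m := by exact_mod_cast hm
  have hx : m * α / L ∈ Icc (0 : ℝ) m := by
    constructor
    · exact div_nonneg (mul_nonneg hm0.le hα.1) hL.le
    · rw [div_le_iff₀ hL]; exact mul_le_mul_of_nonneg_left hα.2 hm0.le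
  obtain ⟨r, hr, hrx, hxr⟩ := exists_nat_mem_Icc_add_one hm hx
  refine ⟨r, hr, ?_, ?_⟩
  · rw [div_le_iff₀ hm0]; rw [le_div_iff₀ hL] at hrx; linarith
  · rw [le_div_iff₀ hm0]; rw [div_le_iff₀ hL] at hxr; linarith

/-- for an integer `m ≥ 1`, any function `ψ : ℝ → ℝ` satisfying
`ψ(α) = (−1)^r·cos(mα) − 2r` on `[rπ/m, (r+1)π/m]` for every `r ∈ {0,…,m−1}` satisfies
`ψ(α) ≤ cos(α)` for every `α ∈ [0, π]`. -/
theorem psi_le_cos (m : ℕ) (hm : 1 ≤ m) (ψ : ℝ → ℝ)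
    (hψ : ∀ r : ℕ, r ≤ m - 1 →
      ∀ α ∈ Icc ((r : ℝ) * π / m) (((r : ℝ) + 1) * π / m),
        ψ α = (-1 : ℝ) ^ r * Real.cos (m * α) - 2 * r) :
    ∀ α ∈ Icc (0 : ℝ) π, ψ α ≤ Real.cos α := by
  intro α hα
  obtain ⟨r, hr, hαr⟩ := exists_mem_Icc_piece hm pi_pos hα
  rw [hψ r hr α hαr]
  rcases Nat.eq_zero_or_pos r with rfl | hr1
  · have hmα : m * α ≤ π := by
      have := hαr.2
      rw [Nat.cast_zero, zero_add, one_mul, le_div_iff₀ (by exact_mod_cast hm)] at this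
      linarith
    simpa using cos_mul_le_cos (by exact_mod_cast hm) hα.1 hmα
  · exact (neg_one_pow_mul_sub_two_mul_le_neg_one hr1 (abs_cos_le_one _)).trans (neg_one_le_cos α)
end
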